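/- Let U be a finite set with |U| = n, let ι be a finite index set, let N : ι → (subsets of U) with N(i) nonempty and |N(i)| ≤ σ₀⁴·n/8 for every i ∈ ι, let σ₀ be a real number with 0 < σ₀ ≤ 1 and σ₀·n ≥ 2, and let s be a natural number with s ≥ σ₀·n. Then there exists S ⊆ ι with |S| = s such that the sets N(i) for i ∈ S are pairwise disjoint and ⋃_{i∈S} N(i) = U, if and only if there exist at least 2^{σ₀·n}/4 distinct witness (σ₀²/4)-halves. -/

import Mathlib

/-!
If `S` is an exact cover of size `s`, then `T ↦ ⋃_{i ∈ T} N(i)` is injective on the subsets of `S`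
(the `N(i)` are disjoint and nonempty), and it sends every `T ⊆ S` whose weight
`∑_{i ∈ T} |N(i)|` lies within `β n` of `n / 2` to a witness `β`-halve, with `S₁ = T` and
`S₂ = S \ T`. For a uniformly random `T ⊆ S` the weight has mean `n / 2` and variance
`∑_{i ∈ S} |N(i)|² / 4 ≤ (max_i |N(i)|) · n / 4 ≤ σ₀⁴ n² / 32 = (β n)² / 2` for `β = σ₀² / 4`,
so by Chebyshev at least half of the `2^s ≥ 2^{σ₀ n}` subsets are balanced.

Conversely, a witness halve yields the exact cover `S₁ ∪ S₂`: the `N(i)` are pairwise disjoint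
because their sizes add up to the size of their union. One exists since `2^{σ₀ n} / 4 ≥ 1`.
-/

/-- `W` is a witness `β`-halve for the Set Partition instance given by `N : ι → Finset α`
(universe `α`) and solution size `s`: its cardinality is within `β·n` of `n/2` and there
exist disjoint `S₁, S₂ ⊆ ι` with `N(S₁ ∪ S₂) = U`, `Σ_{i ∈ S₁∪S₂} |N(i)| = n`,
`N(S₁) = W`, `N(S₂) = U \ W`, and `|S₁| + |S₂| = s`. -/
def IsWitnessHalve {α ι : Type*} [Fintype α] [DecidableEq α] [DecidableEq ι]
    (N : ι → Finset α) (s : ℕ) (β : ℝ) (W : Finset α) : Prop :=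
  (1/2 - β) * (Fintype.card α : ℝ) ≤ (W.card : ℝ) ∧
  (W.card : ℝ) ≤ (1/2 + β) * (Fintype.card α : ℝ) ∧
  ∃ S₁ S₂ : Finset ι, Disjoint S₁ S₂ ∧
    (S₁ ∪ S₂).biUnion N = Finset.univ ∧
    (∑ i ∈ S₁ ∪ S₂, (N i).card) = Fintype.card α ∧
    S₁.biUnion N = W ∧
    S₂.biUnion N = Finset.univ \ W ∧
    S₁.card + S₂.card = s

open Finset

section SecondMoment

variable {ι : Type*} [DecidableEq ι]

theorem Finset.sum_powerset_sub_half_sq {K : Type*} [Field K] [CharZero K]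
    (S : Finset ι) (a : ι → K) :
    ∑ T ∈ S.powerset, (∑ i ∈ T, a i - (∑ i ∈ S, a i) / 2) ^ 2
      = 2 ^ #S * (∑ i ∈ S, a i ^ 2) / 4 := by
  induction S using Finset.induction_on with
  | empty => simp
  | insert x S hx ih =>
    set m := (∑ i ∈ S, a i) / 2
    have hwithout : ∀ T ∈ S.powerset, (∑ i ∈ T, a i - (∑ i ∈ insert x S, a i) / 2) ^ 2
        = (∑ i ∈ T, a i - m) ^ 2 - a x * (∑ i ∈ T, a i - m) + a x ^ 2 / 4 := by
      intro T _
      rw [sum_insert hx]; ring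
    have hwith : ∀ T ∈ S.powerset, (∑ i ∈ insert x T, a i - (∑ i ∈ insert x S, a i) / 2) ^ 2
        = (∑ i ∈ T, a i - m) ^ 2 + a x * (∑ i ∈ T, a i - m) + a x ^ 2 / 4 := by
      intro T hT
      rw [sum_insert hx, sum_insert fun hxT ↦ hx (mem_powerset.1 hT hxT)]; ring
    rw [sum_powerset_insert hx, sum_congr rfl hwithout, sum_congr rfl hwith]
    simp only [sum_add_distrib, sum_sub_distrib, sum_const, card_powerset, ih, nsmul_eq_mul,
      sum_insert hx, card_insert_of_notMem hx]
    push_cast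
    ring

theorem Finset.card_filter_lt_abs_mul_sq_le (S : Finset ι) (a : ι → ℝ) {t : ℝ} (ht : 0 ≤ t) :
    #{T ∈ S.powerset | t < |∑ i ∈ T, a i - (∑ i ∈ S, a i) / 2|} * t ^ 2
      ≤ 2 ^ #S * (∑ i ∈ S, a i ^ 2) / 4 := by
  rw [← sum_powerset_sub_half_sq, ← nsmul_eq_mul]
  calc _ ≤ ∑ T ∈ S.powerset with t < |∑ i ∈ T, a i - (∑ i ∈ S, a i) / 2|,
        (∑ i ∈ T, a i - (∑ i ∈ S, a i) / 2) ^ 2 :=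
        card_nsmul_le_sum _ _ _ fun T hT ↦
          (pow_le_pow_left₀ ht (mem_filter.1 hT).2.le 2).trans_eq (sq_abs _)
    _ ≤ _ := sum_le_sum_of_subset_of_nonneg (filter_subset _ _) fun _ _ _ ↦ sq_nonneg _

theorem Finset.half_le_card_filter_abs_le (S : Finset ι) (a : ι → ℝ) {c t : ℝ} (ht : 0 < t)
    (ha : ∀ i ∈ S, 0 ≤ a i) (hac : ∀ i ∈ S, a i ≤ c) (hct : c * ∑ i ∈ S, a i ≤ 2 * t ^ 2) :
    (2 ^ #S / 2 : ℝ) ≤ #{T ∈ S.powerset | |∑ i ∈ T, a i - (∑ i ∈ S, a i) / 2| ≤ t} := by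
  have hsq : ∑ i ∈ S, a i ^ 2 ≤ 2 * t ^ 2 :=
    calc ∑ i ∈ S, a i ^ 2 ≤ ∑ i ∈ S, c * a i :=
          sum_le_sum fun i hi ↦ by rw [sq]; exact mul_le_mul_of_nonneg_right (hac i hi) (ha i hi)
      _ ≤ 2 * t ^ 2 := by rwa [← mul_sum]
  have hfar := S.card_filter_lt_abs_mul_sq_le a ht.le
  have hsplit := S.powerset.card_filter_add_card_filter_not
    fun T ↦ |∑ i ∈ T, a i - (∑ i ∈ S, a i) / 2| ≤ t
  simp only [not_le, card_powerset] at hsplit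
  replace hsplit := congrArg (Nat.cast : ℕ → ℝ) hsplit
  push_cast at hsplit
  have hfar_le :
      (#{T ∈ S.powerset | t < |∑ i ∈ T, a i - (∑ i ∈ S, a i) / 2|} : ℝ) ≤ 2 ^ #S / 2 :=
    le_of_mul_le_mul_right (hfar.trans (by nlinarith [pow_pos (two_pos (α := ℝ)) #S]))
      (pow_pos ht 2)
  linarith

end SecondMoment

section DisjointFamily

variable {ι α : Type*} [DecidableEq ι] [DecidableEq α] {N : ι → Finset α} {S T T' : Finset ι}

theorem Finset.pairwiseDisjoint_of_sum_card_le_card_biUnion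
    (h : ∑ i ∈ S, #(N i) ≤ #(S.biUnion N)) : (S : Set ι).PairwiseDisjoint N := by
  induction S using Finset.induction_on with
  | empty => simp
  | insert x S hx ih =>
    rw [sum_insert hx, biUnion_insert] at h
    have hunion := card_union_le (N x) (S.biUnion N)
    have hS : #(S.biUnion N) ≤ ∑ i ∈ S, #(N i) := card_biUnion_le
    have hdisj : Disjoint (N x) (S.biUnion N) := card_union_eq_card_add_card.1 (by omega)
    rw [coe_insert, Set.pairwiseDisjoint_insert_of_notMem (mod_cast hx)]
    exact ⟨ih (by omega), fun j hj ↦ hdisj.mono_right (subset_biUnion_of_mem N hj)⟩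

theorem Finset.subset_of_biUnion_subset_biUnion (hpd : (S : Set ι).PairwiseDisjoint N)
    (hne : ∀ i ∈ S, (N i).Nonempty) (hT : T ⊆ S) (hT' : T' ⊆ S)
    (h : T.biUnion N ⊆ T'.biUnion N) : T ⊆ T' := by
  intro i hi
  obtain ⟨x, hx⟩ := hne i (hT hi)
  obtain ⟨j, hj, hxj⟩ := mem_biUnion.1 (h (mem_biUnion.2 ⟨i, hi, hx⟩))
  obtain rfl : i = j := by
    by_contra hij
    exact disjoint_left.1 (hpd (hT hi) (hT' hj) hij) hx hxj
  exact hj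

theorem Finset.injOn_biUnion_powerset (hpd : (S : Set ι).PairwiseDisjoint N)
    (hne : ∀ i ∈ S, (N i).Nonempty) :
    Set.InjOn (fun T : Finset ι ↦ T.biUnion N) (S.powerset : Set (Finset ι)) := by
  intro T hT T' hT' h
  rw [coe_powerset, Set.mem_preimage, Set.mem_powerset_iff, coe_subset] at hT hT'
  exact (subset_of_biUnion_subset_biUnion hpd hne hT hT' h.le).antisymm
    (subset_of_biUnion_subset_biUnion hpd hne hT' hT h.ge)

theorem Finset.biUnion_sdiff_of_pairwiseDisjoint (hpd : (S : Set ι).PairwiseDisjoint N)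
    (hT : T ⊆ S) : (S \ T).biUnion N = S.biUnion N \ T.biUnion N := by
  apply coe_injective
  simp only [coe_biUnion, coe_sdiff]
  rw [Set.biUnion_sdiff_biUnion_eq]
  rwa [Set.union_eq_left.2 (coe_subset.2 hT), pairwiseDisjoint_coe]

end DisjointFamily

section WitnessHalve

variable {α ι : Type*} [Fintype α] [DecidableEq α] [DecidableEq ι] {N : ι → Finset α}
  {s : ℕ} {β : ℝ}

theorem IsWitnessHalve.exists_exactCover {W : Finset α} (h : IsWitnessHalve N s β W) :
    ∃ S : Finset ι, #S = s ∧ (S : Set ι).PairwiseDisjoint N ∧ S.biUnion N = univ := by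
  obtain ⟨-, -, S₁, S₂, hdisj, hcover, hsum, -, -, hcard⟩ := h
  refine ⟨S₁ ∪ S₂, by rw [card_union_of_disjoint hdisj, hcard], ?_, hcover⟩
  exact pairwiseDisjoint_of_sum_card_le_card_biUnion (by rw [hsum, hcover, card_univ])

theorem isWitnessHalve_biUnion {S T : Finset ι} (hS : #S = s)
    (hpd : (S : Set ι).PairwiseDisjoint N) (hcover : S.biUnion N = univ) (hT : T ⊆ S)
    (hbal : |∑ i ∈ T, (#(N i) : ℝ) - Fintype.card α / 2| ≤ β * Fintype.card α) :
    IsWitnessHalve N s β (T.biUnion N) := by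
  have hcardW : (#(T.biUnion N) : ℝ) = ∑ i ∈ T, (#(N i) : ℝ) := by
    rw [card_biUnion (hpd.subset (coe_subset.2 hT)), Nat.cast_sum]
  have hsum : ∑ i ∈ S, #(N i) = Fintype.card α := by rw [← card_biUnion hpd, hcover, card_univ]
  obtain ⟨hlow, hhigh⟩ := abs_le.1 hbal
  refine ⟨by rw [hcardW]; linarith, by rw [hcardW]; linarith,
    T, S \ T, disjoint_sdiff, ?_, ?_, rfl, ?_, ?_⟩
  · rw [union_sdiff_of_subset hT, hcover]
  · rw [union_sdiff_of_subset hT, hsum]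
  · rw [biUnion_sdiff_of_pairwiseDisjoint hpd hT, hcover]
  · rw [card_sdiff_of_subset hT, ← hS, Nat.add_sub_cancel' (card_le_card hT)]

theorem card_filter_le_ncard_isWitnessHalve {S : Finset ι} (hS : #S = s)
    (hpd : (S : Set ι).PairwiseDisjoint N) (hcover : S.biUnion N = univ)
    (hne : ∀ i ∈ S, (N i).Nonempty) :
    #{T ∈ S.powerset | |∑ i ∈ T, (#(N i) : ℝ) - Fintype.card α / 2| ≤ β * Fintype.card α}
      ≤ {W : Finset α | IsWitnessHalve N s β W}.ncard := by
  rw [← Set.ncard_coe_finset,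
    ← ((injOn_biUnion_powerset hpd hne).mono (coe_subset.2 (filter_subset _ _))).ncard_image]
  refine Set.ncard_le_ncard ?_ (Set.toFinite _)
  rintro _ ⟨T, hT, rfl⟩
  rw [coe_filter, Set.mem_ofPred_eq, mem_powerset] at hT
  exact isWitnessHalve_biUnion hS hpd hcover hT.1 hT.2

end WitnessHalve

theorem stmt_9_general {α ι : Type*} [Fintype α] [DecidableEq α] [DecidableEq ι]
    (n : ℕ) (hn : Fintype.card α = n) (N : ι → Finset α) (σ₀ : ℝ) (s : ℕ)
    (hne : ∀ i, (N i).Nonempty)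
    (hsize : ∀ i, ((N i).card : ℝ) ≤ σ₀^4 * (n : ℝ) / 8)
    (hσ0 : 0 < σ₀) (hσn : 2 ≤ σ₀ * (n : ℝ)) (hs : σ₀ * (n : ℝ) ≤ (s : ℝ)) :
    (∃ S : Finset ι, S.card = s ∧ (S : Set ι).PairwiseDisjoint N ∧
        S.biUnion N = Finset.univ) ↔
    (2 : ℝ) ^ (σ₀ * (n : ℝ)) / 4 ≤
      ({W : Finset α | IsWitnessHalve N s (σ₀^2/4) W}.ncard : ℝ) := by
  subst hn
  constructor
  · rintro ⟨S, hS, hpd, hcover⟩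
    have hsum : ∑ i ∈ S, (#(N i) : ℝ) = Fintype.card α := by
      rw [← Nat.cast_sum, ← card_biUnion hpd, hcover, card_univ]
    have hn : (0 : ℝ) < Fintype.card α := pos_of_mul_pos_right (hσn.trans_lt' two_pos) hσ0.le
    have hbalanced := S.half_le_card_filter_abs_le (fun i ↦ (#(N i) : ℝ))
      (c := σ₀ ^ 4 * Fintype.card α / 8) (t := σ₀ ^ 2 / 4 * Fintype.card α) (by positivity)
      (fun _ _ ↦ Nat.cast_nonneg _) (fun i _ ↦ hsize i) (le_of_eq (by rw [hsum]; ring))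
    rw [hsum, hS] at hbalanced
    have hcount := card_filter_le_ncard_isWitnessHalve (β := σ₀ ^ 2 / 4) hS hpd hcover
      fun i _ ↦ hne i
    calc (2 : ℝ) ^ (σ₀ * Fintype.card α) / 4 ≤ 2 ^ s / 2 := by
          have := Real.rpow_natCast 2 s ▸ Real.rpow_le_rpow_of_exponent_le one_le_two hs
          linarith [Real.rpow_pos_of_pos two_pos (σ₀ * Fintype.card α)]
      _ ≤ _ := hbalanced
      _ ≤ _ := mod_cast hcount
  · intro h
    have h4 : (4 : ℝ) ≤ 2 ^ (σ₀ * Fintype.card α) := by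
      have := Real.rpow_le_rpow_of_exponent_le one_le_two hσn
      rwa [Real.rpow_two, sq, two_mul, two_add_two_eq_four] at this
    have hpos : {W : Finset α | IsWitnessHalve N s (σ₀ ^ 2 / 4) W}.ncard ≠ 0 := by
      intro h0; rw [h0] at h; norm_num at h; linarith
    obtain ⟨W, hW⟩ := Set.nonempty_of_ncard_ne_zero hpos
    exact hW.exists_exactCover

theorem stmt_9 {α ι : Type*} [Fintype α] [DecidableEq α] [Fintype ι] [DecidableEq ι]
    (n : ℕ) (hn : Fintype.card α = n) (N : ι → Finset α) (σ₀ : ℝ) (s : ℕ)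
    (hne : ∀ i, (N i).Nonempty)
    (hsize : ∀ i, ((N i).card : ℝ) ≤ σ₀^4 * (n : ℝ) / 8)
    (hσ0 : 0 < σ₀) (hσ1 : σ₀ ≤ 1) (hσn : 2 ≤ σ₀ * (n : ℝ)) (hs : σ₀ * (n : ℝ) ≤ (s : ℝ)) :
    (∃ S : Finset ι, S.card = s ∧ (S : Set ι).PairwiseDisjoint N ∧
        S.biUnion N = Finset.univ) ↔
    (2 : ℝ) ^ (σ₀ * (n : ℝ)) / 4 ≤
      ({W : Finset α | IsWitnessHalve N s (σ₀^2/4) W}.ncard : ℝ) :=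
  stmt_9_general n hn N σ₀ s hne hsize hσ0 hσn hs
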